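/- arXiv:1912.01441 — 12 statements merged into one kernel-verified Lean document; each statement's English description precedes it below -/
import Mathlib

section
/- Let A₁ and A₂ be Hom-associative color algebras over the same abelian group G with bicharacter ε. Then the tensor product A = A₁ ⊗ A₂ with twisting map α = α₁ ⊗ α₂ and product (a₁⊗a₂)∗(b₁⊗b₂) = ε(a₂,b₁)(a₁·₁b₁)⊗(a₂·₂b₂) is a Hom-associative color algebra. -/
open scoped TensorProduct

/-- the tensor product of two Hom-associative color algebras is a
Hom-associative color algebra. -/
theorem stmt_0 {K G A₁ A₂ : Type*} [Field K] [AddCommGroup G]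
    [AddCommGroup A₁] [Module K A₁] [AddCommGroup A₂] [Module K A₂]
    (ε : G → G → K)
    (hεs : ∀ a b, ε a b * ε b a = 1)
    (hεr : ∀ a b c, ε a (b + c) = ε a b * ε a c)
    (hεl : ∀ a b c, ε (a + b) c = ε a c * ε b c)
    (𝒜₁ : G → Submodule K A₁) (𝒜₂ : G → Submodule K A₂)
    (μ₁ : A₁ →ₗ[K] A₁ →ₗ[K] A₁) (μ₂ : A₂ →ₗ[K] A₂ →ₗ[K] A₂)
    (α₁ : A₁ →ₗ[K] A₁) (α₂ : A₂ →ₗ[K] A₂)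
    (hμ₁ : ∀ a b : G, ∀ x ∈ 𝒜₁ a, ∀ y ∈ 𝒜₁ b, μ₁ x y ∈ 𝒜₁ (a + b))
    (hμ₂ : ∀ a b : G, ∀ x ∈ 𝒜₂ a, ∀ y ∈ 𝒜₂ b, μ₂ x y ∈ 𝒜₂ (a + b))
    (hα₁ : ∀ a : G, ∀ x ∈ 𝒜₁ a, α₁ x ∈ 𝒜₁ a)
    (hα₂ : ∀ a : G, ∀ x ∈ 𝒜₂ a, α₂ x ∈ 𝒜₂ a)
    (hassoc₁ : ∀ a b c : G, ∀ x ∈ 𝒜₁ a, ∀ y ∈ 𝒜₁ b, ∀ z ∈ 𝒜₁ c,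
      μ₁ (α₁ x) (μ₁ y z) = μ₁ (μ₁ x y) (α₁ z))
    (hassoc₂ : ∀ a b c : G, ∀ x ∈ 𝒜₂ a, ∀ y ∈ 𝒜₂ b, ∀ z ∈ 𝒜₂ c,
      μ₂ (α₂ x) (μ₂ y z) = μ₂ (μ₂ x y) (α₂ z))
    (m : A₁ ⊗[K] A₂ →ₗ[K] A₁ ⊗[K] A₂ →ₗ[K] A₁ ⊗[K] A₂)
    (hm : ∀ a₁ a₂ b₁ b₂ : G, ∀ x₁ ∈ 𝒜₁ a₁, ∀ x₂ ∈ 𝒜₂ a₂, ∀ y₁ ∈ 𝒜₁ b₁, ∀ y₂ ∈ 𝒜₂ b₂,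
      m (x₁ ⊗ₜ[K] x₂) (y₁ ⊗ₜ[K] y₂) = ε a₂ b₁ • (μ₁ x₁ y₁ ⊗ₜ[K] μ₂ x₂ y₂))
    (T : G → Submodule K (A₁ ⊗[K] A₂))
    (hT : ∀ g, T g = Submodule.span K
      {t | ∃ a b : G, a + b = g ∧ ∃ x ∈ 𝒜₁ a, ∃ y ∈ 𝒜₂ b, t = x ⊗ₜ[K] y}) :
    (∀ g : G, ∀ t ∈ T g, TensorProduct.map α₁ α₂ t ∈ T g) ∧
    (∀ a b : G, ∀ u ∈ T a, ∀ v ∈ T b, m u v ∈ T (a + b)) ∧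
    (∀ a b c : G, ∀ u ∈ T a, ∀ v ∈ T b, ∀ w ∈ T c,
      m (TensorProduct.map α₁ α₂ u) (m v w) = m (m u v) (TensorProduct.map α₁ α₂ w)) := by

  refine ⟨?_, ?_, ?_⟩
  · intro g t ht
    rw [hT] at ht ⊢
    induction ht using Submodule.span_induction with
    | mem x hx =>
      obtain ⟨a, b, hab, x₁, hx₁, y, hy, rfl⟩ := hx
      rw [TensorProduct.map_tmul]
      exact Submodule.subset_span ⟨a, b, hab, _, hα₁ a _ hx₁, _, hα₂ b _ hy, rfl⟩
    | zero => simp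
    | add x y _ _ hx hy => rw [map_add]; exact add_mem hx hy
    | smul c x _ hx => rw [map_smul]; exact Submodule.smul_mem _ c hx
  · intro a b u hu v hv
    rw [hT] at hu hv ⊢
    induction hu using Submodule.span_induction with
    | mem x hx =>
      induction hv using Submodule.span_induction with
      | mem y hy =>
        obtain ⟨a₁, a₂, ha, x₁, hx₁, x₂, hx₂, rfl⟩ := hx
        obtain ⟨b₁, b₂, hb, y₁, hy₁, y₂, hy₂, rfl⟩ := hy
        rw [hm a₁ a₂ b₁ b₂ x₁ hx₁ x₂ hx₂ y₁ hy₁ y₂ hy₂]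
        refine Submodule.smul_mem _ _ (Submodule.subset_span
          ⟨a₁ + b₁, a₂ + b₂, ?_, _, hμ₁ a₁ b₁ x₁ hx₁ y₁ hy₁, _, hμ₂ a₂ b₂ x₂ hx₂ y₂ hy₂, rfl⟩)
        rw [← ha, ← hb]; abel
      | zero => simp
      | add y z _ _ hy hz => rw [map_add]; exact add_mem hy hz
      | smul c y _ hy => rw [map_smul]; exact Submodule.smul_mem _ c hy
    | zero => simp
    | add x y _ _ hx hy => rw [map_add, LinearMap.add_apply]; exact add_mem hx hy
    | smul c x _ hx => rw [map_smul, LinearMap.smul_apply]; exact Submodule.smul_mem _ c hx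
  · intro a b c u hu v hv w hw
    rw [hT] at hu hv hw
    induction hu using Submodule.span_induction with
    | zero => simp
    | add x y _ _ hx hy => simp only [map_add, LinearMap.add_apply, hx, hy]
    | smul r x _ hx => simp only [map_smul, LinearMap.smul_apply, hx]
    | mem x hx =>
      induction hv using Submodule.span_induction with
      | zero => simp
      | add y z _ _ hy hz => simp only [map_add, LinearMap.add_apply, hy, hz]
      | smul r y _ hy => simp only [map_smul, LinearMap.smul_apply, hy]
      | mem y hy =>
        induction hw using Submodule.span_induction with
        | zero => simp
        | add z z' _ _ hz hz' => simp only [map_add, LinearMap.add_apply, hz, hz']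
        | smul r z _ hz => simp only [map_smul, LinearMap.smul_apply, hz]
        | mem z hz =>
          obtain ⟨a₁, a₂, ha, x₁, hx₁, x₂, hx₂, rfl⟩ := hx
          obtain ⟨b₁, b₂, hb, y₁, hy₁, y₂, hy₂, rfl⟩ := hy
          obtain ⟨c₁, c₂, hc, z₁, hz₁, z₂, hz₂, rfl⟩ := hz
          rw [TensorProduct.map_tmul, TensorProduct.map_tmul,
            hm b₁ b₂ c₁ c₂ y₁ hy₁ y₂ hy₂ z₁ hz₁ z₂ hz₂,
            hm a₁ a₂ b₁ b₂ x₁ hx₁ x₂ hx₂ y₁ hy₁ y₂ hy₂,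
            map_smul, LinearMap.map_smul₂,
            hm a₁ a₂ (b₁ + c₁) (b₂ + c₂) (α₁ x₁) (hα₁ a₁ x₁ hx₁) (α₂ x₂) (hα₂ a₂ x₂ hx₂)
              (μ₁ y₁ z₁) (hμ₁ b₁ c₁ y₁ hy₁ z₁ hz₁) (μ₂ y₂ z₂) (hμ₂ b₂ c₂ y₂ hy₂ z₂ hz₂),
            hm (a₁ + b₁) (a₂ + b₂) c₁ c₂ (μ₁ x₁ y₁) (hμ₁ a₁ b₁ x₁ hx₁ y₁ hy₁)
              (μ₂ x₂ y₂) (hμ₂ a₂ b₂ x₂ hx₂ y₂ hy₂) (α₁ z₁) (hα₁ c₁ z₁ hz₁) (α₂ z₂) (hα₂ c₂ z₂ hz₂),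
            hassoc₁ a₁ b₁ c₁ x₁ hx₁ y₁ hy₁ z₁ hz₁,
            hassoc₂ a₂ b₂ c₂ x₂ hx₂ y₂ hy₂ z₂ hz₂,
            smul_smul, smul_smul, hεr, hεl]
          congr 1
          ring
end

section
/- Let (S, ∗, ε, α_S) be a Hom-left-symmetric color algebra and (A, ·, ε, α_A) a commutative Hom-associative color algebra. Then S⊗A with twisting α_S⊗α_A and product (x⊗a)∘(y⊗b) = ε(a,y)(x∗y)⊗(a·b) is a Hom-left-symmetric color algebra. -/
open scoped TensorProduct

/-- the tensor product of a Hom-left-symmetric color algebra with a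
commutative Hom-associative color algebra is a Hom-left-symmetric color algebra. -/
theorem stmt_2 {K G S A : Type*} [Field K] [AddCommGroup G]
    [AddCommGroup S] [Module K S] [AddCommGroup A] [Module K A]
    (ε : G → G → K)
    (hεs : ∀ a b, ε a b * ε b a = 1)
    (hεr : ∀ a b c, ε a (b + c) = ε a b * ε a c)
    (hεl : ∀ a b c, ε (a + b) c = ε a c * ε b c)
    (𝒮 : G → Submodule K S) (𝒜 : G → Submodule K A)
    (μS : S →ₗ[K] S →ₗ[K] S) (μA : A →ₗ[K] A →ₗ[K] A)
    (αS : S →ₗ[K] S) (αA : A →ₗ[K] A)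
    (hμS : ∀ a b : G, ∀ x ∈ 𝒮 a, ∀ y ∈ 𝒮 b, μS x y ∈ 𝒮 (a + b))
    (hμA : ∀ a b : G, ∀ x ∈ 𝒜 a, ∀ y ∈ 𝒜 b, μA x y ∈ 𝒜 (a + b))
    (hαS : ∀ a : G, ∀ x ∈ 𝒮 a, αS x ∈ 𝒮 a)
    (hαA : ∀ a : G, ∀ x ∈ 𝒜 a, αA x ∈ 𝒜 a)
    -- S is a Hom-left-symmetric color algebra
    (hLS : ∀ a b c : G, ∀ x ∈ 𝒮 a, ∀ y ∈ 𝒮 b, ∀ z ∈ 𝒮 c,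
      μS (μS x y) (αS z) - μS (αS x) (μS y z)
        = ε a b • (μS (μS y x) (αS z) - μS (αS y) (μS x z)))
    -- A is a commutative Hom-associative color algebra
    (hassocA : ∀ a b c : G, ∀ x ∈ 𝒜 a, ∀ y ∈ 𝒜 b, ∀ z ∈ 𝒜 c,
      μA (αA x) (μA y z) = μA (μA x y) (αA z))
    (hcommA : ∀ a b : G, ∀ x ∈ 𝒜 a, ∀ y ∈ 𝒜 b, μA x y = ε a b • μA y x)
    (m : S ⊗[K] A →ₗ[K] S ⊗[K] A →ₗ[K] S ⊗[K] A)
    (hm : ∀ a₁ a₂ b₁ b₂ : G, ∀ x ∈ 𝒮 a₁, ∀ a ∈ 𝒜 a₂, ∀ y ∈ 𝒮 b₁, ∀ b ∈ 𝒜 b₂,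
      m (x ⊗ₜ[K] a) (y ⊗ₜ[K] b) = ε a₂ b₁ • (μS x y ⊗ₜ[K] μA a b))
    (T : G → Submodule K (S ⊗[K] A))
    (hT : ∀ g, T g = Submodule.span K
      {t | ∃ a b : G, a + b = g ∧ ∃ x ∈ 𝒮 a, ∃ y ∈ 𝒜 b, t = x ⊗ₜ[K] y}) :
    (∀ g : G, ∀ t ∈ T g, TensorProduct.map αS αA t ∈ T g) ∧
    (∀ a b : G, ∀ u ∈ T a, ∀ v ∈ T b, m u v ∈ T (a + b)) ∧
    (∀ a b c : G, ∀ u ∈ T a, ∀ v ∈ T b, ∀ w ∈ T c,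
      m (m u v) (TensorProduct.map αS αA w) - m (TensorProduct.map αS αA u) (m v w)
        = ε a b • (m (m v u) (TensorProduct.map αS αA w)
            - m (TensorProduct.map αS αA v) (m u w))) := by
  have hTmem : ∀ (a b : G), ∀ x ∈ 𝒮 a, ∀ p ∈ 𝒜 b, x ⊗ₜ[K] p ∈ T (a + b) := by
    intro a b x hx p hp
    rw [hT]
    exact Submodule.subset_span ⟨a, b, rfl, x, hx, p, hp, rfl⟩
  refine ⟨?_, ?_, ?_⟩
  · intro g t ht
    rw [hT] at ht
    induction ht using Submodule.span_induction with
    | mem t h =>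
      obtain ⟨a, b, hab, x, hx, p, hp, rfl⟩ := h
      rw [TensorProduct.map_tmul]
      exact hab ▸ hTmem a b _ (hαS a x hx) _ (hαA b p hp)
    | zero => simp
    | add u v _ _ h1 h2 => rw [map_add]; exact add_mem h1 h2
    | smul c u _ h => rw [map_smul]; exact Submodule.smul_mem _ _ h
  · intro a b u hu v hv
    rw [hT] at hu hv
    induction hu using Submodule.span_induction with
    | mem u h =>
      obtain ⟨a1, a2, ha, x, hx, p, hp, rfl⟩ := h
      induction hv using Submodule.span_induction with
      | mem v h' =>
        obtain ⟨b1, b2, hb, y, hy, q, hq, rfl⟩ := h'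
        rw [hm a1 a2 b1 b2 x hx p hp y hy q hq]
        have hsum : (a1 + b1) + (a2 + b2) = a + b := by rw [← ha, ← hb]; abel
        exact Submodule.smul_mem _ _
          (hsum ▸ hTmem _ _ _ (hμS _ _ _ hx _ hy) _ (hμA _ _ _ hp _ hq))
      | zero => simp
      | add v v' _ _ h1 h2 => rw [map_add]; exact add_mem h1 h2
      | smul c v _ h => rw [map_smul]; exact Submodule.smul_mem _ _ h
    | zero => simp
    | add u u' _ _ h1 h2 => rw [map_add, LinearMap.add_apply]; exact add_mem h1 h2
    | smul c u _ h => rw [map_smul, LinearMap.smul_apply]; exact Submodule.smul_mem _ _ h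
  · intro a b c u hu v hv w hw
    rw [hT] at hu hv hw
    induction hu using Submodule.span_induction with
    | mem u h =>
      obtain ⟨a1, a2, ha, x, hx, p, hp, rfl⟩ := h
      induction hv using Submodule.span_induction with
      | mem v h' =>
        obtain ⟨b1, b2, hb, y, hy, q, hq, rfl⟩ := h'
        induction hw using Submodule.span_induction with
        | mem w h'' =>
          obtain ⟨c1, c2, hc, z, hz, r, hr, rfl⟩ := h''
          -- abbreviations
          set D1 := μS (μS x y) (αS z) with hD1
          set E1 := μS (αS x) (μS y z) with hE1
          set D2 := μS (μS y x) (αS z) with hD2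
          set E2 := μS (αS y) (μS x z) with hE2
          set M := μA (μA p q) (αA r) with hM
          have hMcomm : μA q p = ε b2 a2 • μA p q := hcommA b2 a2 q hq p hp
          have hA1 : μA (αA p) (μA q r) = M := hassocA a2 b2 c2 p hp q hq r hr
          have hA3 : μA (μA q p) (αA r) = ε b2 a2 • M := by
            rw [hMcomm, map_smul, LinearMap.smul_apply]
          have hA2 : μA (αA q) (μA p r) = ε b2 a2 • M := by
            rw [hassocA b2 a2 c2 q hq p hp r hr, hA3]
          have t1 : m (m (x ⊗ₜ[K] p) (y ⊗ₜ[K] q)) (TensorProduct.map αS αA (z ⊗ₜ[K] r))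
              = (ε a2 b1 * (ε a2 c1 * ε b2 c1)) • (D1 ⊗ₜ[K] M) := by
            rw [TensorProduct.map_tmul, hm a1 a2 b1 b2 x hx p hp y hy q hq, map_smul,
              LinearMap.smul_apply,
              hm (a1 + b1) (a2 + b2) c1 c2 _ (hμS _ _ _ hx _ hy) _ (hμA _ _ _ hp _ hq)
                _ (hαS _ _ hz) _ (hαA _ _ hr),
              smul_smul, hεl]
          have t2 : m (TensorProduct.map αS αA (x ⊗ₜ[K] p)) (m (y ⊗ₜ[K] q) (z ⊗ₜ[K] r))
              = (ε a2 b1 * (ε a2 c1 * ε b2 c1)) • (E1 ⊗ₜ[K] M) := by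
            rw [TensorProduct.map_tmul, hm b1 b2 c1 c2 y hy q hq z hz r hr, map_smul,
              hm a1 a2 (b1 + c1) (b2 + c2) _ (hαS _ _ hx) _ (hαA _ _ hp)
                _ (hμS _ _ _ hy _ hz) _ (hμA _ _ _ hq _ hr),
              smul_smul, hεr, hA1]
            ring_nf
            rfl
          have t3 : m (m (y ⊗ₜ[K] q) (x ⊗ₜ[K] p)) (TensorProduct.map αS αA (z ⊗ₜ[K] r))
              = (ε b2 a1 * (ε b2 c1 * ε a2 c1) * ε b2 a2) • (D2 ⊗ₜ[K] M) := by
            rw [TensorProduct.map_tmul, hm b1 b2 a1 a2 y hy q hq x hx p hp, map_smul,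
              LinearMap.smul_apply,
              hm (b1 + a1) (b2 + a2) c1 c2 _ (hμS _ _ _ hy _ hx) _ (hμA _ _ _ hq _ hp)
                _ (hαS _ _ hz) _ (hαA _ _ hr),
              hA3, TensorProduct.tmul_smul, smul_smul, smul_smul, hεl]
          have t4 : m (TensorProduct.map αS αA (y ⊗ₜ[K] q)) (m (x ⊗ₜ[K] p) (z ⊗ₜ[K] r))
              = (ε b2 a1 * (ε b2 c1 * ε a2 c1) * ε b2 a2) • (E2 ⊗ₜ[K] M) := by
            rw [TensorProduct.map_tmul, hm a1 a2 c1 c2 x hx p hp z hz r hr, map_smul,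
              hm b1 b2 (a1 + c1) (a2 + c2) _ (hαS _ _ hy) _ (hαA _ _ hq)
                _ (hμS _ _ _ hx _ hz) _ (hμA _ _ _ hp _ hr),
              hA2, TensorProduct.tmul_smul, smul_smul, smul_smul, hεr]
            ring_nf
            rfl
          rw [t1, t2, t3, t4, ← smul_sub, ← smul_sub]
          have hS := hLS a1 b1 c1 x hx y hy z hz
          have hSM : D1 ⊗ₜ[K] M - E1 ⊗ₜ[K] M = ε a1 b1 • (D2 ⊗ₜ[K] M - E2 ⊗ₜ[K] M) := by
            rw [hD1, hE1, hD2, hE2, ← TensorProduct.sub_tmul, hS,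
              ← TensorProduct.smul_tmul', TensorProduct.sub_tmul]
          rw [hSM, smul_smul, smul_smul]
          have hεab : ε a b = ε a1 b1 * ε a1 b2 * (ε a2 b1 * ε a2 b2) := by
            rw [← ha, ← hb, hεl, hεr, hεr]
          rw [show ε a2 b1 * (ε a2 c1 * ε b2 c1) * ε a1 b1
              = ε a b * (ε b2 a1 * (ε b2 c1 * ε a2 c1) * ε b2 a2) from by
            rw [hεab]
            linear_combination (-(ε a1 b1 * ε a2 b1 * ε a2 c1 * ε b2 c1 * (ε a2 b2 * ε b2 a2))) * hεs a1 b2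
              + (-(ε a1 b1 * ε a2 b1 * ε a2 c1 * ε b2 c1)) * hεs a2 b2]
        | zero => simp
        | add w w' _ _ h1 h2 =>
          simp only [map_add, LinearMap.add_apply]
          linear_combination (norm := module) h1 + h2
        | smul d w _ h =>
          simp only [map_smul, LinearMap.smul_apply]
          linear_combination (norm := module) d • h
      | zero => simp
      | add v v' _ _ h1 h2 =>
        simp only [map_add, LinearMap.add_apply]
        linear_combination (norm := module) h1 + h2
      | smul d v _ h =>
        simp only [map_smul, LinearMap.smul_apply]
        linear_combination (norm := module) d • h
    | zero => simp
    | add u u' _ _ h1 h2 =>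
      simp only [map_add, LinearMap.add_apply]
      linear_combination (norm := module) h1 + h2
    | smul d u _ h =>
      simp only [map_smul, LinearMap.smul_apply]
      linear_combination (norm := module) d • h
end

section
/- A Hom-left-symmetric color dialgebra (S, ⊣, ⊢, ε, α) is a Hom-associative color dialgebra if and only if both products ⊣ and ⊢ are Hom-associative (i.e., α(x)⋆(y⋆z) = (x⋆y)⋆α(z) for ⋆ ∈ {⊣,⊢}). -/
/-- a Hom-left-symmetric color dialgebra is a Hom-associative color
dialgebra iff both products are Hom-associative. -/
theorem stmt_3 {K G A : Type*} [Field K] [AddCommGroup G] [AddCommGroup A] [Module K A]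
    (ε : G → G → K) (𝒜 : G → Submodule K A)
    (hεs : ∀ a b, ε a b * ε b a = 1)
    (hεr : ∀ a b c, ε a (b + c) = ε a b * ε a c)
    (hεl : ∀ a b c, ε (a + b) c = ε a c * ε b c)
    (l r : A →ₗ[K] A →ₗ[K] A) (α : A →ₗ[K] A)
    (hl : ∀ a b : G, ∀ x ∈ 𝒜 a, ∀ y ∈ 𝒜 b, l x y ∈ 𝒜 (a + b))
    (hr : ∀ a b : G, ∀ x ∈ 𝒜 a, ∀ y ∈ 𝒜 b, r x y ∈ 𝒜 (a + b))
    (hα : ∀ a : G, ∀ x ∈ 𝒜 a, α x ∈ 𝒜 a)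
    -- Hom-left-symmetric color dialgebra axioms
    (hls1 : ∀ a b c : G, ∀ x ∈ 𝒜 a, ∀ y ∈ 𝒜 b, ∀ z ∈ 𝒜 c,
      l (α x) (l y z) = l (α x) (r y z))
    (hls2 : ∀ a b c : G, ∀ x ∈ 𝒜 a, ∀ y ∈ 𝒜 b, ∀ z ∈ 𝒜 c,
      r (r x y) (α z) = r (l x y) (α z))
    (hls3 : ∀ a b c : G, ∀ x ∈ 𝒜 a, ∀ y ∈ 𝒜 b, ∀ z ∈ 𝒜 c,
      l (α x) (l y z) - l (l x y) (α z)
        = ε a b • (r (α y) (l x z) - l (r y x) (α z)))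
    (hls4 : ∀ a b c : G, ∀ x ∈ 𝒜 a, ∀ y ∈ 𝒜 b, ∀ z ∈ 𝒜 c,
      r (α x) (r y z) - r (r x y) (α z)
        = ε a b • (r (α y) (r x z) - r (r y x) (α z))) :
    -- it is a Hom-associative color dialgebra iff both products are Hom-associative
    ((∀ a b c : G, ∀ x ∈ 𝒜 a, ∀ y ∈ 𝒜 b, ∀ z ∈ 𝒜 c,
        l (r x y) (α z) = r (α x) (l y z)) ∧
     (∀ a b c : G, ∀ x ∈ 𝒜 a, ∀ y ∈ 𝒜 b, ∀ z ∈ 𝒜 c,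
        l (α x) (l y z) = l (l x y) (α z)) ∧
     (∀ a b c : G, ∀ x ∈ 𝒜 a, ∀ y ∈ 𝒜 b, ∀ z ∈ 𝒜 c,
        l (l x y) (α z) = l (α x) (r y z)) ∧
     (∀ a b c : G, ∀ x ∈ 𝒜 a, ∀ y ∈ 𝒜 b, ∀ z ∈ 𝒜 c,
        r (r x y) (α z) = r (α x) (r y z)) ∧
     (∀ a b c : G, ∀ x ∈ 𝒜 a, ∀ y ∈ 𝒜 b, ∀ z ∈ 𝒜 c,
        r (α x) (r y z) = r (l x y) (α z)))
    ↔
    ((∀ a b c : G, ∀ x ∈ 𝒜 a, ∀ y ∈ 𝒜 b, ∀ z ∈ 𝒜 c,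
        l (α x) (l y z) = l (l x y) (α z)) ∧
     (∀ a b c : G, ∀ x ∈ 𝒜 a, ∀ y ∈ 𝒜 b, ∀ z ∈ 𝒜 c,
        r (α x) (r y z) = r (r x y) (α z))) := by
  constructor
  · rintro ⟨h1, h2, h3, h4, h5⟩
    exact ⟨h2, fun a b c x hx y hy z hz => (h4 a b c x hx y hy z hz).symm⟩
  · rintro ⟨hL, hR⟩
    refine ⟨?_, hL, ?_, fun a b c x hx y hy z hz => (hR a b c x hx y hy z hz).symm, ?_⟩
    · intro a b c x hx y hy z hz
      have h3 := hls3 b a c y hy x hx z hz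
      rw [hL b a c y hy x hx z hz, sub_self] at h3
      have hne : ε b a ≠ 0 := by
        intro h
        have := hεs b a
        rw [h, zero_mul] at this
        exact zero_ne_one this
      have := (smul_eq_zero.mp h3.symm).resolve_left hne
      have := sub_eq_zero.mp this
      exact this.symm
    · intro a b c x hx y hy z hz
      rw [← hL a b c x hx y hy z hz, hls1 a b c x hx y hy z hz]
    · intro a b c x hx y hy z hz
      rw [hR a b c x hx y hy z hz, hls2 a b c x hx y hy z hz]
end

section
/- Let (A, μ, ε, α) be a Hom-associative color algebra and N : A → A a Nijenhuis operator. Then the multiplication μ^N(x,y) = μ(N(x),y) + μ(x,N(y)) − N(μ(x,y)) makes (A, μ^N, ε, α) a Hom-associative color algebra. -/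
/-- a Nijenhuis operator on a Hom-associative color algebra induces a
new Hom-associative color algebra structure. -/
theorem stmt_4 {K G A : Type*} [Field K] [AddCommGroup G] [AddCommGroup A] [Module K A]
    (ε : G → G → K) (𝒜 : G → Submodule K A)
    (hεs : ∀ a b, ε a b * ε b a = 1)
    (hεr : ∀ a b c, ε a (b + c) = ε a b * ε a c)
    (hεl : ∀ a b c, ε (a + b) c = ε a c * ε b c)
    (μ : A →ₗ[K] A →ₗ[K] A) (α N : A →ₗ[K] A)
    (hμ : ∀ a b : G, ∀ x ∈ 𝒜 a, ∀ y ∈ 𝒜 b, μ x y ∈ 𝒜 (a + b))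
    (hα : ∀ a : G, ∀ x ∈ 𝒜 a, α x ∈ 𝒜 a)
    (hN : ∀ a : G, ∀ x ∈ 𝒜 a, N x ∈ 𝒜 a)
    (hassoc : ∀ a b c : G, ∀ x ∈ 𝒜 a, ∀ y ∈ 𝒜 b, ∀ z ∈ 𝒜 c,
      μ (α x) (μ y z) = μ (μ x y) (α z))
    (hNα : ∀ x : A, α (N x) = N (α x))
    (hNij : ∀ a b : G, ∀ x ∈ 𝒜 a, ∀ y ∈ 𝒜 b,
      μ (N x) (N y) = N (μ (N x) y + μ x (N y) - N (μ x y))) :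
    ∀ a b c : G, ∀ x ∈ 𝒜 a, ∀ y ∈ 𝒜 b, ∀ z ∈ 𝒜 c,
      (μ (N (α x)) (μ (N y) z + μ y (N z) - N (μ y z))
        + μ (α x) (N (μ (N y) z + μ y (N z) - N (μ y z)))
        - N (μ (α x) (μ (N y) z + μ y (N z) - N (μ y z))))
      = (μ (N (μ (N x) y + μ x (N y) - N (μ x y))) (α z)
        + μ (μ (N x) y + μ x (N y) - N (μ x y)) (N (α z))
        - N (μ (μ (N x) y + μ x (N y) - N (μ x y)) (α z))) := by
  intro a b c x hx y hy z hz
  have hNx := hN a x hx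
  have hNy := hN b y hy
  have hNz := hN c z hz
  have hαx := hα a x hx
  have hμyz := hμ b c y hy z hz
  have hμxy := hμ a b x hx y hy
  have hαz := hα c z hz
  -- Collapse N of the deformed products
  have h1 : N (μ (N y) z + μ y (N z) - N (μ y z)) = μ (N y) (N z) :=
    (hNij b c y hy z hz).symm
  have h2 : N (μ (N x) y + μ x (N y) - N (μ x y)) = μ (N x) (N y) :=
    (hNij a b x hx y hy).symm
  -- Hom-associativity instances
  have hA1 : μ (α (N x)) (μ (N y) z) = μ (μ (N x) (N y)) (α z) :=
    hassoc a b c (N x) hNx (N y) hNy z hz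
  have hA2 : μ (α (N x)) (μ y (N z)) = μ (μ (N x) y) (α (N z)) :=
    hassoc a b c (N x) hNx y hy (N z) hNz
  have hA3 : μ (α x) (μ (N y) z) = μ (μ x (N y)) (α z) :=
    hassoc a b c x hx (N y) hNy z hz
  have hA4 : μ (α x) (μ y (N z)) = μ (μ x y) (α (N z)) :=
    hassoc a b c x hx y hy (N z) hNz
  have hA5 : μ (α (N x)) (μ y z) = μ (μ (N x) y) (α z) :=
    hassoc a b c (N x) hNx y hy z hz
  have hA6 : μ (α x) (μ y z) = μ (μ x y) (α z) :=
    hassoc a b c x hx y hy z hz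
  have hA7 : μ (α x) (μ (N y) (N z)) = μ (μ x (N y)) (α (N z)) :=
    hassoc a b c x hx (N y) hNy (N z) hNz
  -- Nijenhuis applied to cross terms
  have hB1 : μ (N (α x)) (N (μ y z))
      = N (μ (N (α x)) (μ y z) + μ (α x) (N (μ y z)) - N (μ (α x) (μ y z))) :=
    hNij a (b + c) (α x) hαx (μ y z) hμyz
  have hB2 : μ (N (μ x y)) (N (α z))
      = N (μ (N (μ x y)) (α z) + μ (μ x y) (N (α z)) - N (μ (μ x y) (α z))) :=
    hNij (a + b) c (μ x y) hμxy (α z) hαz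
  rw [h1, h2]
  simp only [map_add, map_sub, LinearMap.add_apply, LinearMap.sub_apply] at hB1 hB2 ⊢
  rw [← hNα x, ← hNα z] at *
  rw [hA1, hA2, hA3, hA4, hA7, hB1, hB2, hA5, hA6]
  abel
end

section
/- Let (A, ·, ε) be an associative color algebra and α : A → A an averaging operator such that (A, ·, ε, α) is a Hom-associative color algebra. Define x⊢y = α(x)·y and x⊣y = x·α(y). Then (A, ⊣, ⊢, ε, α) is a Hom-associative color dialgebra. -/
/-- an averaging operator α on an associative color algebra such that
(A, ·, ε, α) is Hom-associative yields a Hom-associative color dialgebra with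
x ⊢ y = α(x)·y and x ⊣ y = x·α(y). -/
theorem stmt_5 {K G A : Type*} [Field K] [AddCommGroup G] [AddCommGroup A] [Module K A]
    (ε : G → G → K) (𝒜 : G → Submodule K A)
    (hεs : ∀ a b, ε a b * ε b a = 1)
    (hεr : ∀ a b c, ε a (b + c) = ε a b * ε a c)
    (hεl : ∀ a b c, ε (a + b) c = ε a c * ε b c)
    (μ : A →ₗ[K] A →ₗ[K] A) (α : A →ₗ[K] A)
    (hμ : ∀ a b : G, ∀ x ∈ 𝒜 a, ∀ y ∈ 𝒜 b, μ x y ∈ 𝒜 (a + b))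
    (hα : ∀ a : G, ∀ x ∈ 𝒜 a, α x ∈ 𝒜 a)
    -- (A, ·, ε) is an associative color algebra
    (hassoc : ∀ a b c : G, ∀ x ∈ 𝒜 a, ∀ y ∈ 𝒜 b, ∀ z ∈ 𝒜 c,
      μ x (μ y z) = μ (μ x y) z)
    -- α is an averaging operator
    (havg1 : ∀ a b : G, ∀ x ∈ 𝒜 a, ∀ y ∈ 𝒜 b, α (μ (α x) y) = μ (α x) (α y))
    (havg2 : ∀ a b : G, ∀ x ∈ 𝒜 a, ∀ y ∈ 𝒜 b, α (μ x (α y)) = μ (α x) (α y))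
    -- (A, ·, ε, α) is a Hom-associative color algebra
    (hhassoc : ∀ a b c : G, ∀ x ∈ 𝒜 a, ∀ y ∈ 𝒜 b, ∀ z ∈ 𝒜 c,
      μ (α x) (μ y z) = μ (μ x y) (α z)) :
    -- the five Hom-associative color dialgebra axioms for
    -- x ⊣ y := μ x (α y) and x ⊢ y := μ (α x) y
    ∀ a b c : G, ∀ x ∈ 𝒜 a, ∀ y ∈ 𝒜 b, ∀ z ∈ 𝒜 c,
      (μ (μ (α x) y) (α (α z)) = μ (α (α x)) (μ y (α z))) ∧
      (μ (α x) (α (μ y (α z))) = μ (μ x (α y)) (α (α z))) ∧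
      (μ (μ x (α y)) (α (α z)) = μ (α x) (α (μ (α y) z))) ∧
      (μ (α (μ (α x) y)) (α z) = μ (α (α x)) (μ (α y) z)) ∧
      (μ (α (α x)) (μ (α y) z) = μ (α (μ x (α y))) (α z)) := by
  intro a b c x hx y hy z hz
  refine ⟨(hhassoc a b c (α x) (hα a x hx) y hy (α z) (hα c z hz)).symm, ?_, ?_, ?_, ?_⟩
  · rw [havg2 b c y hy z hz, hhassoc a b c x hx (α y) (hα b y hy) (α z) (hα c z hz)]
  · rw [havg1 b c y hy z hz, hhassoc a b c x hx (α y) (hα b y hy) (α z) (hα c z hz)]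
  · rw [havg1 a b x hx y hy, hhassoc a b c (α x) (hα a x hx) (α y) (hα b y hy) z hz]
  · rw [havg2 a b x hx y hy, hhassoc a b c (α x) (hα a x hx) (α y) (hα b y hy) z hz]
end

section
/- Let (D, ⊣, ⊢, ε, α) be a Hom-associative color dialgebra. Define {x,y} = x⊣y − ε(x,y) y⊢x for homogeneous x,y. Then (D, ⊣, ⊢, {−,−}, ε, α) is a Hom-Poisson color dialgebra. -/
/-- The color bracket {x,y} = x ⊣ y − ε(x,y) y ⊢ x on homogeneous elements of
degrees a and b. -/
def diBr {K G A : Type*} [Field K] [AddCommGroup G] [AddCommGroup A] [Module K A]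
    (ε : G → G → K) (l r : A →ₗ[K] A →ₗ[K] A) (a b : G) (x y : A) : A :=
  l x y - ε a b • r y x

/-- any Hom-associative color dialgebra gives a Hom-Poisson color
dialgebra via {x,y} = x ⊣ y − ε(x,y) y ⊢ x. -/
theorem stmt_6 {K G A : Type*} [Field K] [AddCommGroup G] [AddCommGroup A] [Module K A]
    (ε : G → G → K) (𝒜 : G → Submodule K A)
    (hεs : ∀ a b, ε a b * ε b a = 1)
    (hεr : ∀ a b c, ε a (b + c) = ε a b * ε a c)
    (hεl : ∀ a b c, ε (a + b) c = ε a c * ε b c)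
    (l r : A →ₗ[K] A →ₗ[K] A) (α : A →ₗ[K] A)
    (hl : ∀ a b : G, ∀ x ∈ 𝒜 a, ∀ y ∈ 𝒜 b, l x y ∈ 𝒜 (a + b))
    (hr : ∀ a b : G, ∀ x ∈ 𝒜 a, ∀ y ∈ 𝒜 b, r x y ∈ 𝒜 (a + b))
    (hα : ∀ a : G, ∀ x ∈ 𝒜 a, α x ∈ 𝒜 a)
    -- Hom-associative color dialgebra axioms
    (hd1 : ∀ a b c : G, ∀ x ∈ 𝒜 a, ∀ y ∈ 𝒜 b, ∀ z ∈ 𝒜 c,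
      l (r x y) (α z) = r (α x) (l y z))
    (hd2 : ∀ a b c : G, ∀ x ∈ 𝒜 a, ∀ y ∈ 𝒜 b, ∀ z ∈ 𝒜 c,
      l (α x) (l y z) = l (l x y) (α z))
    (hd3 : ∀ a b c : G, ∀ x ∈ 𝒜 a, ∀ y ∈ 𝒜 b, ∀ z ∈ 𝒜 c,
      l (l x y) (α z) = l (α x) (r y z))
    (hd4 : ∀ a b c : G, ∀ x ∈ 𝒜 a, ∀ y ∈ 𝒜 b, ∀ z ∈ 𝒜 c,
      r (r x y) (α z) = r (α x) (r y z))
    (hd5 : ∀ a b c : G, ∀ x ∈ 𝒜 a, ∀ y ∈ 𝒜 b, ∀ z ∈ 𝒜 c,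
      r (α x) (r y z) = r (l x y) (α z)) :
    -- Hom-Poisson color dialgebra axioms for the bracket diBr
    ∀ a b c : G, ∀ x ∈ 𝒜 a, ∀ y ∈ 𝒜 b, ∀ z ∈ 𝒜 c,
      (diBr ε l r (a + b) c (l x y) (α z)
        = l (α x) (diBr ε l r b c y z) + ε b c • l (diBr ε l r a c x z) (α y)) ∧
      (diBr ε l r (a + b) c (r x y) (α z)
        = r (α x) (diBr ε l r b c y z) + ε b c • r (diBr ε l r a c x z) (α y)) ∧
      (diBr ε l r a (b + c) (α x) (l y z)
        = ε a b • r (α y) (diBr ε l r a c x z) + l (diBr ε l r a b x y) (α z)) ∧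
      (diBr ε l r a (b + c) (α x) (r y z)
        = ε a b • r (α y) (diBr ε l r a c x z) + l (diBr ε l r a b x y) (α z)) := by

  intro a b c x hx y hy z hz
  have h1a := hd1 c a b z hz x hx y hy  -- l (r z x) (α y) = r (α z) (l x y)
  have h1b := hd1 a b c x hx y hy z hz  -- l (r x y) (α z) = r (α x) (l y z)
  have h1c := hd1 b a c y hy x hx z hz  -- l (r y x) (α z) = r (α y) (l x z)
  have h2 := hd2 a b c x hx y hy z hz   -- l (α x) (l y z) = l (l x y) (α z)
  have h3a := hd3 a c b x hx z hz y hy  -- l (l x z) (α y) = l (α x) (r z y)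
  have h3b := hd3 a b c x hx y hy z hz  -- l (l x y) (α z) = l (α x) (r y z)
  have h4a := hd4 c a b z hz x hx y hy  -- r (r z x) (α y) = r (α z) (r x y)
  have h4b := hd4 b c a y hy z hz x hx  -- r (r y z) (α x) = r (α y) (r z x)
  have h5a := hd5 a c b x hx z hz y hy  -- r (α x) (r z y) = r (l x z) (α y)
  have h5b := hd5 b c a y hy z hz x hx  -- r (α y) (r z x) = r (l y z) (α x)
  simp only [diBr, map_sub, map_smul, LinearMap.sub_apply, LinearMap.smul_apply,
    smul_sub, smul_smul, hεl, hεr]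
  refine ⟨?_, ?_, ?_, ?_⟩
  · rw [← h2, h3a, h1a]; module
  · rw [h1b, h5a, h4a]; module
  · rw [← h2, h1c, ← h5b]; module
  · rw [← h3b, ← h2, h1c, h4b]; module
end

section
/- Let (D, ⊣, ⊢, ε, α) be a Hom-left-symmetric color dialgebra in which both products ⊣ and ⊢ are Hom-associative. Then with {x,y} = x⊣y − ε(x,y) y⊢x, the structure (D, ⊣, ⊢, {−,−}, ε, α) is a Hom-Poisson color dialgebra. -/
/-- a Hom-left-symmetric color dialgebra whose two products are
Hom-associative gives a Hom-Poisson color dialgebra via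
{x,y} = x ⊣ y − ε(x,y) y ⊢ x. -/
theorem stmt_7 {K G A : Type*} [Field K] [AddCommGroup G] [AddCommGroup A] [Module K A]
    (ε : G → G → K) (𝒜 : G → Submodule K A)
    (hεs : ∀ a b, ε a b * ε b a = 1)
    (hεr : ∀ a b c, ε a (b + c) = ε a b * ε a c)
    (hεl : ∀ a b c, ε (a + b) c = ε a c * ε b c)
    (l r : A →ₗ[K] A →ₗ[K] A) (α : A →ₗ[K] A)
    (hl : ∀ a b : G, ∀ x ∈ 𝒜 a, ∀ y ∈ 𝒜 b, l x y ∈ 𝒜 (a + b))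
    (hr : ∀ a b : G, ∀ x ∈ 𝒜 a, ∀ y ∈ 𝒜 b, r x y ∈ 𝒜 (a + b))
    (hα : ∀ a : G, ∀ x ∈ 𝒜 a, α x ∈ 𝒜 a)
    -- Hom-left-symmetric color dialgebra axioms
    (hls1 : ∀ a b c : G, ∀ x ∈ 𝒜 a, ∀ y ∈ 𝒜 b, ∀ z ∈ 𝒜 c,
      l (α x) (l y z) = l (α x) (r y z))
    (hls2 : ∀ a b c : G, ∀ x ∈ 𝒜 a, ∀ y ∈ 𝒜 b, ∀ z ∈ 𝒜 c,
      r (r x y) (α z) = r (l x y) (α z))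
    (hls3 : ∀ a b c : G, ∀ x ∈ 𝒜 a, ∀ y ∈ 𝒜 b, ∀ z ∈ 𝒜 c,
      l (α x) (l y z) - l (l x y) (α z)
        = ε a b • (r (α y) (l x z) - l (r y x) (α z)))
    (hls4 : ∀ a b c : G, ∀ x ∈ 𝒜 a, ∀ y ∈ 𝒜 b, ∀ z ∈ 𝒜 c,
      r (α x) (r y z) - r (r x y) (α z)
        = ε a b • (r (α y) (r x z) - r (r y x) (α z)))
    -- both products are Hom-associative
    (hal : ∀ a b c : G, ∀ x ∈ 𝒜 a, ∀ y ∈ 𝒜 b, ∀ z ∈ 𝒜 c,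
      l (α x) (l y z) = l (l x y) (α z))
    (har : ∀ a b c : G, ∀ x ∈ 𝒜 a, ∀ y ∈ 𝒜 b, ∀ z ∈ 𝒜 c,
      r (α x) (r y z) = r (r x y) (α z)) :
    -- Hom-Poisson color dialgebra axioms for the bracket diBr
    ∀ a b c : G, ∀ x ∈ 𝒜 a, ∀ y ∈ 𝒜 b, ∀ z ∈ 𝒜 c,
      (diBr ε l r (a + b) c (l x y) (α z)
        = l (α x) (diBr ε l r b c y z) + ε b c • l (diBr ε l r a c x z) (α y)) ∧
      (diBr ε l r (a + b) c (r x y) (α z)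
        = r (α x) (diBr ε l r b c y z) + ε b c • r (diBr ε l r a c x z) (α y)) ∧
      (diBr ε l r a (b + c) (α x) (l y z)
        = ε a b • r (α y) (diBr ε l r a c x z) + l (diBr ε l r a b x y) (α z)) ∧
      (diBr ε l r a (b + c) (α x) (r y z)
        = ε a b • r (α y) (diBr ε l r a c x z) + l (diBr ε l r a b x y) (α z)) := by
  have hε0 : ∀ p q : G, ε p q ≠ 0 := by
    intro p q h
    have := hεs p q
    rw [h, zero_mul] at this
    exact zero_ne_one this
  -- key identity from hls3 + hal : r (α v) (l u w) = l (r v u) (α w)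
  have key1 : ∀ p q s : G, ∀ u ∈ 𝒜 p, ∀ v ∈ 𝒜 q, ∀ w ∈ 𝒜 s,
      r (α v) (l u w) = l (r v u) (α w) := by
    intro p q s u hu v hv w hw
    have h3 := hls3 p q s u hu v hv w hw
    rw [hal p q s u hu v hv w hw, sub_self] at h3
    have h4 := (smul_eq_zero.mp h3.symm).resolve_left (hε0 p q)
    exact sub_eq_zero.mp h4
  -- key identity from hls4 + har : r (α v) (r u w) = r (r v u) (α w)
  have key2 : ∀ p q s : G, ∀ u ∈ 𝒜 p, ∀ v ∈ 𝒜 q, ∀ w ∈ 𝒜 s,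
      r (α v) (r u w) = r (r v u) (α w) := by
    intro p q s u hu v hv w hw
    have h4 := hls4 p q s u hu v hv w hw
    rw [har p q s u hu v hv w hw, sub_self] at h4
    have h5 := (smul_eq_zero.mp h4.symm).resolve_left (hε0 p q)
    exact sub_eq_zero.mp h5
  intro a b c x hx y hy z hz
  refine ⟨?_, ?_, ?_, ?_⟩
  · simp only [diBr, map_sub, map_smul, LinearMap.sub_apply, LinearMap.smul_apply,
      hεl, hεr, smul_sub]
    rw [hal a b c x hx y hy z hz, key1 a c b x hx z hz y hy,
      ← hls1 a c b x hx z hz y hy, hal a c b x hx z hz y hy]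
    module
  · simp only [diBr, map_sub, map_smul, LinearMap.sub_apply, LinearMap.smul_apply,
      hεl, hεr, smul_sub]
    rw [key1 b a c y hy x hx z hz, key2 a c b x hx z hz y hy,
      har a c b x hx z hz y hy, hls2 a c b x hx z hz y hy]
    module
  · simp only [diBr, map_sub, map_smul, LinearMap.sub_apply, LinearMap.smul_apply,
      hεl, hεr, smul_sub]
    rw [hal a b c x hx y hy z hz, key1 a b c x hx y hy z hz,
      ← hls2 b c a y hy z hz x hx, ← key2 c b a z hz y hy x hx]
    module
  · simp only [diBr, map_sub, map_smul, LinearMap.sub_apply, LinearMap.smul_apply,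
      hεl, hεr, smul_sub]
    rw [← hls1 a b c x hx y hy z hz, hal a b c x hx y hy z hz,
      key1 a b c x hx y hy z hz, ← key2 c b a z hz y hy x hx]
    module
end

section
/- Let (A, ⊣, ⊢, ·, ε, α) be a Hom-tridendriform color algebra. Define x⊢'y = x⊢y + x·y. Then (A, ⊣, ⊢', ε, α) is a Hom-dendriform color algebra. -/
/-- a Hom-tridendriform color algebra gives a Hom-dendriform color
algebra with x ⊢' y = x ⊢ y + x · y. -/
theorem stmt_9 {K G A : Type*} [Field K] [AddCommGroup G] [AddCommGroup A] [Module K A]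
    (ε : G → G → K) (𝒜 : G → Submodule K A)
    (hεs : ∀ a b, ε a b * ε b a = 1)
    (hεr : ∀ a b c, ε a (b + c) = ε a b * ε a c)
    (hεl : ∀ a b c, ε (a + b) c = ε a c * ε b c)
    (l r d : A →ₗ[K] A →ₗ[K] A) (α : A →ₗ[K] A)
    (hl : ∀ a b : G, ∀ x ∈ 𝒜 a, ∀ y ∈ 𝒜 b, l x y ∈ 𝒜 (a + b))
    (hr : ∀ a b : G, ∀ x ∈ 𝒜 a, ∀ y ∈ 𝒜 b, r x y ∈ 𝒜 (a + b))
    (hd : ∀ a b : G, ∀ x ∈ 𝒜 a, ∀ y ∈ 𝒜 b, d x y ∈ 𝒜 (a + b))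
    (hα : ∀ a : G, ∀ x ∈ 𝒜 a, α x ∈ 𝒜 a)
    -- Hom-tridendriform color algebra axioms
    (h1 : ∀ a b c : G, ∀ x ∈ 𝒜 a, ∀ y ∈ 𝒜 b, ∀ z ∈ 𝒜 c,
      l (l x y) (α z) = l (α x) (l y z + ε c b • r y z + ε c b • d y z))
    (h2 : ∀ a b c : G, ∀ x ∈ 𝒜 a, ∀ y ∈ 𝒜 b, ∀ z ∈ 𝒜 c,
      l (r x y) (α z) = ε c a • r (α x) (l y z))
    (h3 : ∀ a b c : G, ∀ x ∈ 𝒜 a, ∀ y ∈ 𝒜 b, ∀ z ∈ 𝒜 c,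
      r (α x) (r y z) = r (ε a b • l x y + r x y + d x y) (α z))
    (h4 : ∀ a b c : G, ∀ x ∈ 𝒜 a, ∀ y ∈ 𝒜 b, ∀ z ∈ 𝒜 c,
      d (l x y) (α z) = ε b a • d (α x) (r y z))
    (h5 : ∀ a b c : G, ∀ x ∈ 𝒜 a, ∀ y ∈ 𝒜 b, ∀ z ∈ 𝒜 c,
      d (r x y) (α z) = r (α x) (d y z))
    (h6 : ∀ a b c : G, ∀ x ∈ 𝒜 a, ∀ y ∈ 𝒜 b, ∀ z ∈ 𝒜 c,
      l (d x y) (α z) = ε c a • d (α x) (l y z))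
    (h7 : ∀ a b c : G, ∀ x ∈ 𝒜 a, ∀ y ∈ 𝒜 b, ∀ z ∈ 𝒜 c,
      d (d x y) (α z) = d (α x) (d y z)) :
    -- Hom-dendriform color algebra axioms for (⊣, ⊢') = (l, r + d)
    ∀ a b c : G, ∀ x ∈ 𝒜 a, ∀ y ∈ 𝒜 b, ∀ z ∈ 𝒜 c,
      (l (l x y) (α z) = l (α x) (l y z + ε c b • (r + d) y z)) ∧
      (l ((r + d) x y) (α z) = ε c a • (r + d) (α x) (l y z)) ∧
      ((r + d) (α x) ((r + d) y z) = (r + d) (ε a b • l x y + (r + d) x y) (α z)) := by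
  intro a b c x hx y hy z hz
  refine ⟨?_, ?_, ?_⟩
  · rw [h1 a b c x hx y hy z hz]
    simp only [LinearMap.add_apply, smul_add, map_add, map_smul]
    abel
  · simp only [LinearMap.add_apply, map_add, LinearMap.add_apply, smul_add,
      h2 a b c x hx y hy z hz, h6 a b c x hx y hy z hz]
  · have h4' : d (ε a b • l x y) (α z) = d (α x) (r y z) := by
      have := h4 a b c x hx y hy z hz
      simp only [map_smul, LinearMap.smul_apply, this, smul_smul, hεs a b, one_smul]
    simp only [LinearMap.add_apply, map_add, LinearMap.add_apply,
      h3 a b c x hx y hy z hz, h5 a b c x hx y hy z hz,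
      h7 a b c x hx y hy z hz, h4']
    abel
end

section
/- Let (A, μ, ε, α, R) be a Rota-Baxter Hom-associative color algebra of weight λ and β : A → A an algebra endomorphism commuting with R. Then for any nonnegative integer n, (A, βⁿ∘μ, ε, βⁿ∘α, R) is also a Rota-Baxter Hom-associative color algebra of weight λ. -/
/-- twisting a Rota-Baxter Hom-associative color algebra of weight λ
by the n-th power of an algebra endomorphism β commuting with R yields a
Rota-Baxter Hom-associative color algebra of weight λ. -/
theorem stmt_16 {K G A : Type*} [Field K] [AddCommGroup G] [AddCommGroup A] [Module K A]
    (ε : G → G → K) (𝒜 : G → Submodule K A)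
    (hεs : ∀ a b, ε a b * ε b a = 1)
    (hεr : ∀ a b c, ε a (b + c) = ε a b * ε a c)
    (hεl : ∀ a b c, ε (a + b) c = ε a c * ε b c)
    (μ : A →ₗ[K] A →ₗ[K] A) (α R β : A →ₗ[K] A) (lam : K) (n : ℕ)
    (hμ : ∀ a b : G, ∀ x ∈ 𝒜 a, ∀ y ∈ 𝒜 b, μ x y ∈ 𝒜 (a + b))
    (hα : ∀ a : G, ∀ x ∈ 𝒜 a, α x ∈ 𝒜 a)
    (hR : ∀ a : G, ∀ x ∈ 𝒜 a, R x ∈ 𝒜 a)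
    (hβ : ∀ a : G, ∀ x ∈ 𝒜 a, β x ∈ 𝒜 a)
    (hassoc : ∀ a b c : G, ∀ x ∈ 𝒜 a, ∀ y ∈ 𝒜 b, ∀ z ∈ 𝒜 c,
      μ (α x) (μ y z) = μ (μ x y) (α z))
    (hRα : ∀ x : A, R (α x) = α (R x))
    (hRB : ∀ a b : G, ∀ x ∈ 𝒜 a, ∀ y ∈ 𝒜 b,
      μ (R x) (R y) = R (μ (R x) y + μ x (R y) + lam • μ x y))
    -- β is an algebra endomorphism commuting with R
    (hβμ : ∀ x y : A, β (μ x y) = μ (β x) (β y))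
    (hβα : ∀ x : A, β (α x) = α (β x))
    (hβR : ∀ x : A, β (R x) = R (β x)) :
    -- (A, βⁿ∘μ, ε, βⁿ∘α, R) is a Rota-Baxter Hom-associative color algebra of weight λ
    (∀ a b c : G, ∀ x ∈ 𝒜 a, ∀ y ∈ 𝒜 b, ∀ z ∈ 𝒜 c,
      (β ^ n) (μ ((β ^ n) (α x)) ((β ^ n) (μ y z)))
        = (β ^ n) (μ ((β ^ n) (μ x y)) ((β ^ n) (α z)))) ∧
    (∀ a b : G, ∀ x ∈ 𝒜 a, ∀ y ∈ 𝒜 b, (β ^ n) (μ x y) ∈ 𝒜 (a + b)) ∧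
    (∀ a : G, ∀ x ∈ 𝒜 a, (β ^ n) (α x) ∈ 𝒜 a) ∧
    (∀ x : A, R ((β ^ n) (α x)) = (β ^ n) (α (R x))) ∧
    (∀ a b : G, ∀ x ∈ 𝒜 a, ∀ y ∈ 𝒜 b,
      (β ^ n) (μ (R x) (R y))
        = R ((β ^ n) (μ (R x) y) + (β ^ n) (μ x (R y)) + lam • (β ^ n) (μ x y))) := by
  have hβnμ : ∀ m : ℕ, ∀ x y : A, (β ^ m) (μ x y) = μ ((β ^ m) x) ((β ^ m) y) := by
    intro m
    induction m with
    | zero => intro x y; simp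
    | succ k ih =>
      intro x y
      simp only [pow_succ, Module.End.mul_apply, ih, hβμ]
  have hβnα : ∀ m : ℕ, ∀ x : A, (β ^ m) (α x) = α ((β ^ m) x) := by
    intro m
    induction m with
    | zero => intro x; simp
    | succ k ih =>
      intro x
      simp only [pow_succ, Module.End.mul_apply, ih, hβα]
  have hβnR : ∀ m : ℕ, ∀ x : A, (β ^ m) (R x) = R ((β ^ m) x) := by
    intro m
    induction m with
    | zero => intro x; simp
    | succ k ih =>
      intro x
      simp only [pow_succ, Module.End.mul_apply, ih, hβR]
  have hβn : ∀ m : ℕ, ∀ a : G, ∀ x ∈ 𝒜 a, (β ^ m) x ∈ 𝒜 a := by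
    intro m
    induction m with
    | zero => intro a x hx; simpa using hx
    | succ k ih =>
      intro a x hx
      rw [pow_succ, Module.End.mul_apply]
      exact ih a _ (hβ a x hx)
  refine ⟨?_, ?_, ?_, ?_, ?_⟩
  · intro a b c x hx y hy z hz
    simp only [hβnμ, hβnα]
    exact hassoc a b c _ (hβn n a _ (hβn n a x hx)) _ (hβn n b _ (hβn n b y hy))
      _ (hβn n c _ (hβn n c z hz))
  · intro a b x hx y hy
    exact hβn n _ _ (hμ a b x hx y hy)
  · intro a x hx
    exact hβn n _ _ (hα a x hx)
  · intro x
    rw [hβnα, hRα, hβnα, hβnR]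
  · intro a b x hx y hy
    simp only [hβnμ, hβnR]
    exact hRB a b _ (hβn n a x hx) _ (hβn n b y hy)
end

section
/- Let (A, μ, ε, α) be a Hom-associative color algebra with α invertible and α an algebra morphism (α∘μ = μ∘(α⊗α)). Then (A, α⁻¹∘μ, ε) is an associative color algebra. -/
/-- if (A, μ, ε, α) is a Hom-associative color algebra with α an
invertible algebra morphism, then (A, α⁻¹∘μ, ε) is an associative color algebra. -/
theorem stmt_17 {K G A : Type*} [Field K] [AddCommGroup G] [AddCommGroup A] [Module K A]
    (ε : G → G → K) (𝒜 : G → Submodule K A)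
    (hεs : ∀ a b, ε a b * ε b a = 1)
    (hεr : ∀ a b c, ε a (b + c) = ε a b * ε a c)
    (hεl : ∀ a b c, ε (a + b) c = ε a c * ε b c)
    (μ : A →ₗ[K] A →ₗ[K] A) (α αinv : A →ₗ[K] A)
    (hμ : ∀ a b : G, ∀ x ∈ 𝒜 a, ∀ y ∈ 𝒜 b, μ x y ∈ 𝒜 (a + b))
    (hα : ∀ a : G, ∀ x ∈ 𝒜 a, α x ∈ 𝒜 a)
    (hassoc : ∀ a b c : G, ∀ x ∈ 𝒜 a, ∀ y ∈ 𝒜 b, ∀ z ∈ 𝒜 c,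
      μ (α x) (μ y z) = μ (μ x y) (α z))
    -- α is invertible with inverse αinv
    (hinv₁ : ∀ x : A, αinv (α x) = x)
    (hinv₂ : ∀ x : A, α (αinv x) = x)
    -- α is an algebra morphism
    (hαμ : ∀ x y : A, α (μ x y) = μ (α x) (α y)) :
    -- ν = α⁻¹ ∘ μ is associative on homogeneous elements
    ∀ a b c : G, ∀ x ∈ 𝒜 a, ∀ y ∈ 𝒜 b, ∀ z ∈ 𝒜 c,
      αinv (μ (αinv (μ x y)) z) = αinv (μ x (αinv (μ y z))) := by
  intro a b c x hx y hy z hz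
  have key : μ (αinv (μ x y)) z = μ x (αinv (μ y z)) := by
    calc μ (αinv (μ x y)) z = αinv (α (μ (αinv (μ x y)) z)) := (hinv₁ _).symm
      _ = αinv (μ (μ x y) (α z)) := by rw [hαμ, hinv₂]
      _ = αinv (μ (α x) (μ y z)) := by rw [hassoc a b c x hx y hy z hz]
      _ = αinv (α (μ x (αinv (μ y z)))) := by rw [hαμ, hinv₂]
      _ = _ := hinv₁ _
  rw [key]
end

section
/- Let (A, μ, ε, R, α) be a Rota-Baxter Hom-associative color algebra of weight λ, and let β₁, β₂ be commuting elements of the centroid of A that commute with R and α, with βᵢ also commuting with μ in the centroid sense. Define μ_β(x,y) = μ(β₁(x), β₂(y)). Then (A, μ_β, ε, R, β₂∘β₁∘α) is a Rota-Baxter Hom-associative color algebra of weight λ. -/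
/-- twisting a Rota-Baxter Hom-associative color algebra of weight λ
by two commuting centroid elements β₁, β₂ via μ_β(x,y) = μ(β₁ x, β₂ y) yields a
Rota-Baxter Hom-associative color algebra (A, μ_β, ε, R, β₂∘β₁∘α) of weight λ. -/
theorem stmt_18 {K G A : Type*} [Field K] [AddCommGroup G] [AddCommGroup A] [Module K A]
    (ε : G → G → K) (𝒜 : G → Submodule K A)
    (hεs : ∀ a b, ε a b * ε b a = 1)
    (hεr : ∀ a b c, ε a (b + c) = ε a b * ε a c)
    (hεl : ∀ a b c, ε (a + b) c = ε a c * ε b c)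
    (μ : A →ₗ[K] A →ₗ[K] A) (α R β₁ β₂ : A →ₗ[K] A) (lam : K)
    (hμ : ∀ a b : G, ∀ x ∈ 𝒜 a, ∀ y ∈ 𝒜 b, μ x y ∈ 𝒜 (a + b))
    (hα : ∀ a : G, ∀ x ∈ 𝒜 a, α x ∈ 𝒜 a)
    (hR : ∀ a : G, ∀ x ∈ 𝒜 a, R x ∈ 𝒜 a)
    (hβ₁e : ∀ a : G, ∀ x ∈ 𝒜 a, β₁ x ∈ 𝒜 a)
    (hβ₂e : ∀ a : G, ∀ x ∈ 𝒜 a, β₂ x ∈ 𝒜 a)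
    (hassoc : ∀ a b c : G, ∀ x ∈ 𝒜 a, ∀ y ∈ 𝒜 b, ∀ z ∈ 𝒜 c,
      μ (α x) (μ y z) = μ (μ x y) (α z))
    (hRα : ∀ x : A, R (α x) = α (R x))
    (hRB : ∀ a b : G, ∀ x ∈ 𝒜 a, ∀ y ∈ 𝒜 b,
      μ (R x) (R y) = R (μ (R x) y + μ x (R y) + lam • μ x y))
    -- β₁, β₂ are commuting elements of the centroid commuting with R and α
    (hcent₁ : ∀ x y : A, β₁ (μ x y) = μ (β₁ x) y ∧ β₁ (μ x y) = μ x (β₁ y))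
    (hcent₂ : ∀ x y : A, β₂ (μ x y) = μ (β₂ x) y ∧ β₂ (μ x y) = μ x (β₂ y))
    (hββ : ∀ x : A, β₁ (β₂ x) = β₂ (β₁ x))
    (hβR₁ : ∀ x : A, β₁ (R x) = R (β₁ x))
    (hβR₂ : ∀ x : A, β₂ (R x) = R (β₂ x))
    (hβα₁ : ∀ x : A, β₁ (α x) = α (β₁ x))
    (hβα₂ : ∀ x : A, β₂ (α x) = α (β₂ x)) :
    -- (A, μ_β, ε, R, β₂∘β₁∘α) is a Rota-Baxter Hom-associative color algebra
    (∀ a b : G, ∀ x ∈ 𝒜 a, ∀ y ∈ 𝒜 b, μ (β₁ x) (β₂ y) ∈ 𝒜 (a + b)) ∧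
    (∀ a : G, ∀ x ∈ 𝒜 a, β₂ (β₁ (α x)) ∈ 𝒜 a) ∧
    (∀ a b c : G, ∀ x ∈ 𝒜 a, ∀ y ∈ 𝒜 b, ∀ z ∈ 𝒜 c,
      μ (β₁ (β₂ (β₁ (α x)))) (β₂ (μ (β₁ y) (β₂ z)))
        = μ (β₁ (μ (β₁ x) (β₂ y))) (β₂ (β₂ (β₁ (α z))))) ∧
    (∀ x : A, R (β₂ (β₁ (α x))) = β₂ (β₁ (α (R x)))) ∧
    (∀ a b : G, ∀ x ∈ 𝒜 a, ∀ y ∈ 𝒜 b,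
      μ (β₁ (R x)) (β₂ (R y))
        = R (μ (β₁ (R x)) (β₂ y) + μ (β₁ x) (β₂ (R y)) + lam • μ (β₁ x) (β₂ y))) := by
  have l1 : ∀ x y : A, μ (β₁ x) y = β₁ (μ x y) := fun x y => (hcent₁ x y).1.symm
  have l2 : ∀ x y : A, μ x (β₁ y) = β₁ (μ x y) := fun x y => (hcent₁ x y).2.symm
  have l3 : ∀ x y : A, μ (β₂ x) y = β₂ (μ x y) := fun x y => (hcent₂ x y).1.symm
  have l4 : ∀ x y : A, μ x (β₂ y) = β₂ (μ x y) := fun x y => (hcent₂ x y).2.symm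
  refine ⟨fun a b x hx y hy => hμ a b _ (hβ₁e a x hx) _ (hβ₂e b y hy),
    fun a x hx => hβ₂e a _ (hβ₁e a _ (hα a x hx)), ?_, ?_, ?_⟩
  · intro a b c x hx y hy z hz
    simp only [l1, l2, l3, l4, hββ]
    rw [hassoc a b c x hx y hy z hz]
  · intro x
    simp only [← hβR₂, ← hβR₁, hRα]
  · intro a b x hx y hy
    simp only [l1, l4]
    rw [hRB a b x hx y hy]
    simp only [hβR₂, hβR₁, map_add, map_smul]
end

section
/- Let (A, μ, ε, R, α) be a Rota-Baxter Hom-associative color algebra of weight λ and β an element of the centroid of A commuting with R and α. Define μ_β(x,y) = μ(β(x), y). Then (A, μ_β, ε, R, β∘α) is a Rota-Baxter Hom-associative color algebra of weight λ. -/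
/-- twisting a Rota-Baxter Hom-associative color algebra of weight λ
by a centroid element β via μ_β(x,y) = μ(β x, y) yields a Rota-Baxter
Hom-associative color algebra (A, μ_β, ε, R, β∘α) of weight λ. -/
theorem stmt_19 {K G A : Type*} [Field K] [AddCommGroup G] [AddCommGroup A] [Module K A]
    (ε : G → G → K) (𝒜 : G → Submodule K A)
    (hεs : ∀ a b, ε a b * ε b a = 1)
    (hεr : ∀ a b c, ε a (b + c) = ε a b * ε a c)
    (hεl : ∀ a b c, ε (a + b) c = ε a c * ε b c)
    (μ : A →ₗ[K] A →ₗ[K] A) (α R β : A →ₗ[K] A) (lam : K)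
    (hμ : ∀ a b : G, ∀ x ∈ 𝒜 a, ∀ y ∈ 𝒜 b, μ x y ∈ 𝒜 (a + b))
    (hα : ∀ a : G, ∀ x ∈ 𝒜 a, α x ∈ 𝒜 a)
    (hR : ∀ a : G, ∀ x ∈ 𝒜 a, R x ∈ 𝒜 a)
    (hβe : ∀ a : G, ∀ x ∈ 𝒜 a, β x ∈ 𝒜 a)
    (hassoc : ∀ a b c : G, ∀ x ∈ 𝒜 a, ∀ y ∈ 𝒜 b, ∀ z ∈ 𝒜 c,
      μ (α x) (μ y z) = μ (μ x y) (α z))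
    (hRα : ∀ x : A, R (α x) = α (R x))
    (hRB : ∀ a b : G, ∀ x ∈ 𝒜 a, ∀ y ∈ 𝒜 b,
      μ (R x) (R y) = R (μ (R x) y + μ x (R y) + lam • μ x y))
    -- β is an element of the centroid commuting with R and α
    (hcent : ∀ x y : A, β (μ x y) = μ (β x) y ∧ β (μ x y) = μ x (β y))
    (hβR : ∀ x : A, β (R x) = R (β x))
    (hβα : ∀ x : A, β (α x) = α (β x)) :
    -- (A, μ_β, ε, R, β∘α) is a Rota-Baxter Hom-associative color algebra
    (∀ a b : G, ∀ x ∈ 𝒜 a, ∀ y ∈ 𝒜 b, μ (β x) y ∈ 𝒜 (a + b)) ∧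
    (∀ a : G, ∀ x ∈ 𝒜 a, β (α x) ∈ 𝒜 a) ∧
    (∀ a b c : G, ∀ x ∈ 𝒜 a, ∀ y ∈ 𝒜 b, ∀ z ∈ 𝒜 c,
      μ (β (β (α x))) (μ (β y) z) = μ (β (μ (β x) y)) (β (α z))) ∧
    (∀ x : A, R (β (α x)) = β (α (R x))) ∧
    (∀ a b : G, ∀ x ∈ 𝒜 a, ∀ y ∈ 𝒜 b,
      μ (β (R x)) (R y)
        = R (μ (β (R x)) y + μ (β x) (R y) + lam • μ (β x) y)) := by
  refine ⟨fun a b x hx y hy => hμ a b _ (hβe a x hx) y hy,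
    fun a x hx => hβe a _ (hα a x hx), ?_, fun x => by rw [hβα, hβα, hRα, hβR], ?_⟩
  · intro a b c x hx y hy z hz
    have h1 : β (β (α x)) = α (β (β x)) := by rw [hβα, hβα]
    have h2 : μ (β y) z = β (μ y z) := (hcent y z).1.symm
    have h3 : β (μ (β x) y) = μ (β (β x)) y := (hcent (β x) y).1
    rw [h1, h2, ← (hcent _ _).2, hassoc a b c (β (β x)) (hβe a _ (hβe a x hx)) y hy z hz,
      (hcent _ _).2, h3, hβα]
  · intro a b x hx y hy
    rw [hβR, hRB a b (β x) (hβe a x hx) y hy]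
end
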